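/- arXiv:0704.2802 — 2 statements merged into one kernel-verified Lean document; each statement's English description precedes it below -/
import Mathlib

section
/- Let Λ be a finitely aligned k-graph. Then the path space W of Λ is a locally compact metrizable space under the topology of pointwise convergence on Y (the subspace topology induced from 2^Y by the injection α), and this topology is the disjoint union topology of the compact open subsets W_v, v ∈ Λ⁰; that is, W is the disjoint union of the sets W_v, each W_v is compact and open in W, and every point of W has a compact neighborhood. -/
open Filter Topology

/-- A higher-rank graph (`k`-graph): a countable small category `Λ` together with a
degree functor `d : Λ → ℕ^k` (with `ℕ^k` viewed as a one-object category under
addition) satisfying the unique factorization property. -/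
structure KGraph (k : ℕ) where
  Obj : Type
  Mor : Type
  objCountable : Countable Obj
  morCountable : Countable Mor
  r : Mor → Obj
  s : Mor → Obj
  id : Obj → Mor
  r_id : ∀ v, r (id v) = v
  s_id : ∀ v, s (id v) = v
  comp : (μ ν : Mor) → s μ = r ν → Mor
  r_comp : ∀ μ ν h, r (comp μ ν h) = r μ
  s_comp : ∀ μ ν h, s (comp μ ν h) = s ν
  id_comp : ∀ ν (h : s (id (r ν)) = r ν), comp (id (r ν)) ν h = ν
  comp_id : ∀ μ (h : s μ = r (id (s μ))), comp μ (id (s μ)) h = μ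
  assoc : ∀ l μ ν (h₁ : s l = r μ) (h₂ : s (comp l μ h₁) = r ν) (h₁' : s μ = r ν)
    (h₂' : s l = r (comp μ ν h₁')), comp (comp l μ h₁) ν h₂ = comp l (comp μ ν h₁') h₂'
  d : Mor → (Fin k → ℕ)
  d_id : ∀ v, d (id v) = 0
  d_comp : ∀ μ ν h, d (comp μ ν h) = d μ + d ν
  factor_exists : ∀ (l : Mor) (m n : Fin k → ℕ), d l = m + n →
    ∃ (μ ν : Mor) (h : s μ = r ν), comp μ ν h = l ∧ d μ = m ∧ d ν = n
  factor_unique : ∀ (l : Mor) (m n : Fin k → ℕ), d l = m + n →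
    ∀ (μ ν : Mor) (h : s μ = r ν) (μ' ν' : Mor) (h' : s μ' = r ν'),
      comp μ ν h = l → comp μ' ν' h' = l → d μ = m → d ν = n → d μ' = m → d ν' = n →
      μ = μ' ∧ ν = ν'

namespace KGraph

variable {k : ℕ} (G : KGraph k)

/-- `μ ≤ λ` in `Λ`: `λ = μν` for some `ν`. -/
def le (μ l : G.Mor) : Prop := ∃ (ν : G.Mor) (h : G.s μ = G.r ν), G.comp μ ν h = l

/-- An element of the path space `W`: an `N`-path for some `N ∈ (ℕ ∪ {∞})^k`, i.e. a
family `{λ_m : m ∈ ℕ^k, m ≤ N}` with `d(λ_m) = m` and `λ_m ≤ λ_n` whenever `m ≤ n`. -/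
structure Path where
  deg : Fin k → ℕ∞
  seg : (m : Fin k → ℕ) → (∀ i, (m i : ℕ∞) ≤ deg i) → G.Mor
  d_seg : ∀ m h, G.d (seg m h) = m
  mono : ∀ m n (hm : ∀ i, (m i : ℕ∞) ≤ deg i) (hn : ∀ i, (n i : ℕ∞) ≤ deg i),
    (∀ i, m i ≤ n i) → G.le (seg m hm) (seg n hn)

/-- `y ≤ w` for a finite path `y ∈ Y = Λ` and `w ∈ W`: `y = w_{d(y)}`. -/
def lePath (y : G.Mor) (w : G.Path) : Prop :=
  ∃ h : ∀ i, ((G.d y) i : ℕ∞) ≤ w.deg i, w.seg (G.d y) h = y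

open Classical in
/-- The map `α : W → 2^Y = {0,1}^Y`, `α(w)(y) = 1` iff `y ≤ w`. -/
noncomputable def alpha (w : G.Path) : G.Mor → Bool :=
  fun y => if G.lePath y w then true else false


/-- The topology of pointwise convergence on `Y`: the topology on the path space `W`
pulled back from the product topology on `2^Y = {0,1}^Y` via the injection `α`. -/
noncomputable instance : TopologicalSpace G.Path :=
  TopologicalSpace.induced G.alpha inferInstance

/-- `w₀`, the degree-zero segment of a path `w`. -/
def Path.root (w : G.Path) : G.Mor := w.seg (fun _ => 0) (fun i => by simp)

/-- `W_v = {w ∈ W : w₀ = v}`. -/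
def Wv (v : G.Obj) : Set G.Path := {w : G.Path | w.root = G.id v}

/-- `Λ` is finitely aligned: for all `λ, μ` the set
`E_{λ,μ} = {ν : λ ≤ ν, μ ≤ ν, d(ν) = d(λ) ∨ d(μ)}` is finite. -/
def FinitelyAligned : Prop :=
  ∀ l μ : G.Mor, {ν : G.Mor | G.le l ν ∧ G.le μ ν ∧ G.d ν = G.d l ⊔ G.d μ}.Finite

end KGraph

section Aux

open Topology

lemma enat_eq_of_forall_nat_le {a b : ℕ∞} (h : ∀ n : ℕ, (n : ℕ∞) ≤ a ↔ (n : ℕ∞) ≤ b) : a = b := by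
  induction a using ENat.recTopCoe with
  | top =>
    induction b using ENat.recTopCoe with
    | top => rfl
    | coe n => have := (h (n+1)).mp le_top; exact absurd (Nat.cast_le.mp this) (by omega)
  | coe m =>
    induction b using ENat.recTopCoe with
    | top => have := (h (m+1)).mpr le_top; exact absurd (Nat.cast_le.mp this) (by omega)
    | coe n =>
      have h1 := Nat.cast_le.mp ((h m).mp le_rfl)
      have h2 := Nat.cast_le.mp ((h n).mpr le_rfl)
      congr 1; omega

namespace KGraph

variable {k : ℕ} (G : KGraph k)

lemma seg_congr (w : G.Path) {m m' : Fin k → ℕ} (hmm : m = m')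
    (h : ∀ i, (m i : ℕ∞) ≤ w.deg i) (h' : ∀ i, (m' i : ℕ∞) ≤ w.deg i) :
    w.seg m h = w.seg m' h' := by subst hmm; rfl

lemma lePath_seg (w : G.Path) (m : Fin k → ℕ) (h : ∀ i, (m i : ℕ∞) ≤ w.deg i) :
    G.lePath (w.seg m h) w := by
  unfold KGraph.lePath
  rw [w.d_seg m h]
  exact ⟨h, rfl⟩

lemma lePath_of_seg (w : G.Path) (m : Fin k → ℕ) (h : ∀ i, (m i : ℕ∞) ≤ w.deg i)
    {y : G.Mor} (hy : w.seg m h = y) : G.lePath y w := hy ▸ G.lePath_seg w m h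

lemma eq_id_of_d_eq_zero {μ : G.Mor} (h : G.d μ = 0) : μ = G.id (G.r μ) := by
  have h0 : G.d μ = 0 + 0 := by simp [h]
  have h1 : G.s (G.id (G.r μ)) = G.r μ := G.s_id _
  have h2 : G.s μ = G.r (G.id (G.s μ)) := by rw [G.r_id]
  exact (G.factor_unique μ 0 0 h0 (G.id (G.r μ)) μ h1 μ (G.id (G.s μ)) h2
    (G.id_comp μ h1) (G.comp_id μ h2) (G.d_id _) h h (G.d_id _)).1.symm

lemma lePath_unique {y y' : G.Mor} {w : G.Path} (h : G.lePath y w) (h' : G.lePath y' w)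
    (hd : G.d y = G.d y') : y = y' := by
  obtain ⟨hy, hy2⟩ := h
  obtain ⟨hy', hy2'⟩ := h'
  rw [← hy2, ← hy2']
  exact G.seg_congr w hd _ _

lemma lePath_le {y μ : G.Mor} {w : G.Path} (h : G.lePath y w) (hle : G.le μ y) :
    G.lePath μ w := by
  obtain ⟨ν, hsr, hcomp⟩ := hle
  have hd : G.d y = G.d μ + G.d ν := by rw [← hcomp, G.d_comp]
  obtain ⟨hy, hy2⟩ := h
  have hmle : ∀ i, ((G.d μ) i : ℕ∞) ≤ w.deg i := fun i => le_trans
    (Nat.cast_le.mpr (by have := congrFun hd i; simp only [Pi.add_apply] at this; omega)) (hy i)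
  obtain ⟨ν', hsr', hcomp'⟩ := w.mono (G.d μ) (G.d y) hmle hy
    (fun i => by have := congrFun hd i; simp only [Pi.add_apply] at this; omega)
  rw [hy2] at hcomp'
  have h3 : G.d μ + G.d ν' = G.d μ + G.d ν := by
    rw [← hd, ← hcomp', G.d_comp, w.d_seg]
  have hdν' : G.d ν' = G.d ν := by
    funext i; have := congrFun h3 i; simp only [Pi.add_apply] at this; omega
  have := G.factor_unique y (G.d μ) (G.d ν) hd _ ν' hsr' μ ν hsr hcomp' hcomp
    (w.d_seg _ _) hdν' rfl rfl
  exact ⟨hmle, this.1⟩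

lemma alpha_eq_true_iff (w : G.Path) (y : G.Mor) : G.alpha w y = true ↔ G.lePath y w := by
  by_cases h : G.lePath y w <;> simp [KGraph.alpha, h]

lemma le_deg_of_lePath_imp {w w' : G.Path}
    (hiff : ∀ y, G.lePath y w → G.lePath y w') (i : Fin k) (n : ℕ)
    (hn : (n : ℕ∞) ≤ w.deg i) : (n : ℕ∞) ≤ w'.deg i := by
  set m : Fin k → ℕ := fun j => if j = i then n else 0 with hm
  have hmle : ∀ j, ((m j : ℕ) : ℕ∞) ≤ w.deg j := by
    intro j
    by_cases hj : j = i
    · subst hj; simpa [hm] using hn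
    · simp [hm, hj]
  have h1 := hiff _ (G.lePath_seg w m hmle)
  have h2 := h1.1
  rw [w.d_seg m hmle] at h2
  simpa [hm] using h2 i

lemma Path.ext' {w w' : G.Path} (hd : w.deg = w'.deg)
    (hs : ∀ (m : Fin k → ℕ) (h : ∀ i, (m i : ℕ∞) ≤ w.deg i)
      (h' : ∀ i, (m i : ℕ∞) ≤ w'.deg i), w.seg m h = w'.seg m h') : w = w' := by
  obtain ⟨d1, s1, p1, q1⟩ := w
  obtain ⟨d2, s2, p2, q2⟩ := w'
  dsimp only at hd hs
  subst hd
  have hseq : s1 = s2 := funext fun m => funext fun h => hs m h h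
  subst hseq
  rfl

lemma alpha_injective : Function.Injective G.alpha := by
  intro w w' h
  have hiff : ∀ y, G.lePath y w ↔ G.lePath y w' := by
    intro y
    rw [← G.alpha_eq_true_iff, ← G.alpha_eq_true_iff, h]
  have hdeg : w.deg = w'.deg := by
    funext i
    apply enat_eq_of_forall_nat_le
    intro n
    exact ⟨fun hn => G.le_deg_of_lePath_imp (fun y => (hiff y).mp) i n hn,
      fun hn => G.le_deg_of_lePath_imp (fun y => (hiff y).mpr) i n hn⟩
  apply Path.ext' G hdeg
  intro m hm hm'
  obtain ⟨hh, hh2⟩ := (hiff _).mp (G.lePath_seg w m hm)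
  rw [← hh2]
  exact G.seg_congr w' (w.d_seg m hm) hh hm'

lemma mem_Wv_iff (v : G.Obj) (w : G.Path) : w ∈ G.Wv v ↔ G.lePath (G.id v) w := by
  constructor
  · intro h
    exact G.lePath_of_seg w (fun _ => 0) (fun i => by simp) h
  · rintro ⟨h, heq⟩
    show w.seg (fun _ => 0) (fun i => by simp) = G.id v
    rw [← heq]
    exact G.seg_congr w (by funext i; simp [G.d_id]) _ h

lemma exists_path (v : G.Obj) (S : Set G.Mor)
    (hv : G.id v ∈ S)
    (hpre : ∀ y μ, y ∈ S → G.le μ y → μ ∈ S)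
    (huniq : ∀ y y', y ∈ S → y' ∈ S → G.d y = G.d y' → y = y')
    (hdir : ∀ y y', y ∈ S → y' ∈ S → ∃ ν ∈ S, G.d ν = G.d y ⊔ G.d y') :
    ∃ w : G.Path, w ∈ G.Wv v ∧ ∀ y, G.lePath y w ↔ y ∈ S := by
  have hdown : ∀ y ∈ S, ∀ m : Fin k → ℕ, (∀ i, m i ≤ G.d y i) → ∃ μ ∈ S, G.d μ = m := by
    intro y hy m hm
    have hfac : G.d y = m + (G.d y - m) := by
      funext i; have := hm i; simp only [Pi.add_apply, Pi.sub_apply]; omega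
    obtain ⟨μ, ν, hsr, hcomp, hdμ, _⟩ := G.factor_exists y m (G.d y - m) hfac
    exact ⟨μ, hpre y μ hy ⟨ν, hsr, hcomp⟩, hdμ⟩
  set N : Fin k → ℕ∞ := fun i => ⨆ y : S, ((G.d y.1 i : ℕ) : ℕ∞) with hN
  have hkey : ∀ m : Fin k → ℕ, (∀ i, (m i : ℕ∞) ≤ N i) → ∃ y, y ∈ S ∧ G.d y = m := by
    intro m hm
    have hA : ∀ i : Fin k, ∃ y ∈ S, m i ≤ G.d y i := by
      intro i
      rcases Nat.eq_zero_or_pos (m i) with h0 | hpos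
      · exact ⟨G.id v, hv, by omega⟩
      · have hlt : ((m i - 1 : ℕ) : ℕ∞) < N i :=
          lt_of_lt_of_le (by exact_mod_cast Nat.sub_lt hpos one_pos) (hm i)
        rw [hN] at hlt
        obtain ⟨⟨y, hy⟩, hy2⟩ := lt_iSup_iff.mp hlt
        have : m i - 1 < G.d y i := by exact_mod_cast hy2
        exact ⟨y, hy, by omega⟩
    have hB : ∀ t : Finset (Fin k), ∃ y ∈ S, ∀ i ∈ t, m i ≤ G.d y i := by
      intro t
      induction t using Finset.induction_on with
      | empty => exact ⟨G.id v, hv, by simp⟩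
      | @insert a t ha ih =>
        obtain ⟨y₁, hy₁, hy₁2⟩ := ih
        obtain ⟨y₂, hy₂, hy₂2⟩ := hA a
        obtain ⟨ν, hν, hνd⟩ := hdir y₂ y₁ hy₂ hy₁
        refine ⟨ν, hν, ?_⟩
        intro i hi
        have hmax : G.d ν i = max (G.d y₂ i) (G.d y₁ i) := by rw [hνd]; rfl
        rw [Finset.mem_insert] at hi
        rcases hi with hi | hi
        · subst hi; rw [hmax]; exact le_max_of_le_left hy₂2
        · rw [hmax]; exact le_max_of_le_right (hy₁2 i hi)
    obtain ⟨y, hy, hy2⟩ := hB Finset.univ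
    obtain ⟨μ, hμ, hμ2⟩ := hdown y hy m (fun i => hy2 i (Finset.mem_univ i))
    exact ⟨μ, hμ, hμ2⟩
  refine ⟨⟨N, fun m h => (hkey m h).choose, fun m h => (hkey m h).choose_spec.2, ?_⟩, ?_, ?_⟩
  · intro m n hm hn hmn
    show G.le (hkey m hm).choose (hkey n hn).choose
    have hz := (hkey n hn).choose_spec.1
    have hzd := (hkey n hn).choose_spec.2
    have hfac : G.d (hkey n hn).choose = m + (n - m) := by
      rw [hzd]; funext i; have := hmn i; simp only [Pi.add_apply, Pi.sub_apply]; omega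
    obtain ⟨μ, ν, hsr, hcomp, hdμ, _⟩ := G.factor_exists _ m (n - m) hfac
    have hμS : μ ∈ S := hpre _ μ hz ⟨ν, hsr, hcomp⟩
    have heq : μ = (hkey m hm).choose :=
      huniq _ _ hμS (hkey m hm).choose_spec.1 (by rw [hdμ, (hkey m hm).choose_spec.2])
    rw [← heq]
    exact ⟨ν, hsr, hcomp⟩
  · have h0 : ∀ i : Fin k, (((fun _ => 0 : Fin k → ℕ) i : ℕ) : ℕ∞) ≤ N i := fun i => by simp
    show (hkey (fun _ => 0) h0).choose = G.id v
    exact huniq _ _ (hkey _ h0).choose_spec.1 hv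
      (by rw [(hkey _ h0).choose_spec.2, G.d_id]; rfl)
  · intro y
    constructor
    · rintro ⟨h, hh⟩
      rw [← hh]
      exact (hkey _ h).choose_spec.1
    · intro hy
      have hle : ∀ i, ((G.d y) i : ℕ∞) ≤ N i := by
        intro i
        rw [hN]
        exact le_iSup (fun z : S => ((G.d z.1 i : ℕ) : ℕ∞)) ⟨y, hy⟩
      exact ⟨hle, huniq _ _ (hkey _ hle).choose_spec.1 hy (by rw [(hkey _ hle).choose_spec.2])⟩

end KGraph

end Aux

/-- Corollary 2.3: for a finitely aligned `k`-graph, the path space `W` (with the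
topology of pointwise convergence on `Y`, induced from `2^Y` via `α`) is a locally
compact metrizable space, and this topology is the disjoint union topology of the
compact open subsets `W_v`: `W` is the disjoint union of the `W_v`, each `W_v` is
compact and open, and every point has a compact neighborhood. -/
theorem stmt2 {k : ℕ} (G : KGraph k) (hG : G.FinitelyAligned) :
    TopologicalSpace.MetrizableSpace G.Path ∧
      ((⋃ v : G.Obj, G.Wv v) = Set.univ) ∧
      (Pairwise fun v v' : G.Obj => Disjoint (G.Wv v) (G.Wv v')) ∧
      (∀ v : G.Obj, IsCompact (G.Wv v) ∧ IsOpen (G.Wv v)) ∧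
      ∀ w : G.Path, ∃ K : Set G.Path, IsCompact K ∧ K ∈ nhds w := by
  classical
  haveI := G.morCountable
  have hemb : IsEmbedding G.alpha := ⟨⟨rfl⟩, G.alpha_injective⟩
  have hcont : Continuous G.alpha := hemb.continuous
  have hroot : ∀ w : G.Path, w.root = G.id (G.r w.root) :=
    fun w => G.eq_id_of_d_eq_zero (w.d_seg _ _)
  have hWv_mem : ∀ w : G.Path, w ∈ G.Wv (G.r w.root) := fun w => hroot w
  have hopen : ∀ v, IsOpen (G.Wv v) := by
    intro v
    have heq : G.Wv v = G.alpha ⁻¹' {f | f (G.id v) = true} := by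
      ext w
      rw [Set.mem_preimage, Set.mem_setOf_eq, G.alpha_eq_true_iff]
      exact G.mem_Wv_iff v w
    rw [heq]
    refine hcont.isOpen_preimage _ ?_
    have : {f : G.Mor → Bool | f (G.id v) = true}
        = (fun f : G.Mor → Bool => f (G.id v)) ⁻¹' {true} := rfl
    rw [this]
    exact (continuous_apply _).isOpen_preimage _ (isOpen_discrete _)
  have hcompact : ∀ v, IsCompact (G.Wv v) := by
    intro v
    set C : Set (G.Mor → Bool) :=
      {f | f (G.id v) = true ∧
        (∀ y μ, f y = true → G.le μ y → f μ = true) ∧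
        (∀ y y', f y = true → f y' = true → (G.d y = G.d y' → y = y')) ∧
        (∀ y y', f y = true → f y' = true →
          ∃ ν ∈ {ν | G.le y ν ∧ G.le y' ν ∧ G.d ν = G.d y ⊔ G.d y'}, f ν = true)} with hC
    have hco : ∀ (y : G.Mor) (b : Bool), IsClosed {f : G.Mor → Bool | f y = b} :=
      fun y b => isClosed_eq (continuous_apply y) continuous_const
    have himp : ∀ (y y' : G.Mor) (P : Set (G.Mor → Bool)), IsClosed P →
        IsClosed {f : G.Mor → Bool | f y = true → f y' = true → f ∈ P} := by
      intro y y' P hP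
      have hset : {f : G.Mor → Bool | f y = true → f y' = true → f ∈ P}
          = {f | f y = false} ∪ ({f | f y' = false} ∪ P) := by
        ext f
        simp only [Set.mem_setOf_eq, Set.mem_union]
        constructor
        · intro h
          cases hb : f y with
          | false => exact Or.inl rfl
          | true =>
            cases hb' : f y' with
            | false => exact Or.inr (Or.inl rfl)
            | true => exact Or.inr (Or.inr (h hb hb'))
        · rintro (h | h | h) h1 h2
          · rw [h1] at h; simp at h
          · rw [h2] at h; simp at h
          · exact h
      rw [hset]
      exact (hco y false).union ((hco y' false).union hP)
    have hconst : ∀ Q : Prop, IsClosed {f : G.Mor → Bool | Q} := by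
      intro Q
      by_cases hQ : Q
      · simp only [hQ, Set.setOf_true]; exact isClosed_univ
      · simp only [hQ, Set.setOf_false]; exact isClosed_empty
    have hclosed : IsClosed C := by
      have hCeq : C = {f : G.Mor → Bool | f (G.id v) = true} ∩
          ((⋂ y, ⋂ μ, ⋂ (_ : G.le μ y),
            {f : G.Mor → Bool | f y = true → f y = true → f ∈ {g : G.Mor → Bool | g μ = true}}) ∩
          ((⋂ y, ⋂ y',
            {f : G.Mor → Bool | f y = true → f y' = true →
              f ∈ {g : G.Mor → Bool | G.d y = G.d y' → y = y'}}) ∩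
          (⋂ y, ⋂ y',
            {f : G.Mor → Bool | f y = true → f y' = true →
              f ∈ ⋃ ν ∈ {ν | G.le y ν ∧ G.le y' ν ∧ G.d ν = G.d y ⊔ G.d y'},
                {g : G.Mor → Bool | g ν = true}}))) := by
        rw [hC]
        ext f
        simp only [Set.mem_setOf_eq, Set.mem_inter_iff, Set.mem_iInter, Set.mem_iUnion,
          Set.mem_setOf_eq, exists_prop]
        constructor
        · rintro ⟨h0, h1, h2, h3⟩
          refine ⟨h0, fun y μ hle hy _ => h1 y μ hy hle, h2, fun y y' hy hy' => ?_⟩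
          obtain ⟨ν, hν, hν2⟩ := h3 y y' hy hy'
          exact ⟨ν, hν, hν2⟩
        · rintro ⟨h0, h1, h2, h3⟩
          refine ⟨h0, fun y μ hy hle => h1 y μ hle hy hy, h2, fun y y' hy hy' => ?_⟩
          obtain ⟨ν, hν, hν2⟩ := h3 y y' hy hy'
          exact ⟨ν, hν, hν2⟩
      rw [hCeq]
      refine (hco _ true).inter (IsClosed.inter ?_ (IsClosed.inter ?_ ?_))
      · exact isClosed_iInter fun y => isClosed_iInter fun μ => isClosed_iInter fun _ =>
          himp y y _ (hco μ true)
      · exact isClosed_iInter fun y => isClosed_iInter fun y' =>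
          himp y y' _ (hconst _)
      · refine isClosed_iInter fun y => isClosed_iInter fun y' => himp y y' _ ?_
        exact Set.Finite.isClosed_biUnion (hG y y') (fun ν _ => hco ν true)
    have himg : G.alpha '' (G.Wv v) = C := by
      apply Set.Subset.antisymm
      · rintro _ ⟨w, hw, rfl⟩
        have hlv : G.lePath (G.id v) w := (G.mem_Wv_iff v w).mp hw
        rw [hC]
        refine ⟨(G.alpha_eq_true_iff w _).mpr hlv, ?_, ?_, ?_⟩
        · intro y μ hy hle
          rw [G.alpha_eq_true_iff] at hy ⊢
          exact G.lePath_le hy hle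
        · intro y y' hy hy' hd
          rw [G.alpha_eq_true_iff] at hy hy'
          exact G.lePath_unique hy hy' hd
        · intro y y' hy hy'
          rw [G.alpha_eq_true_iff] at hy hy'
          have hm : ∀ i, (((G.d y ⊔ G.d y') i : ℕ) : ℕ∞) ≤ w.deg i := by
            intro i
            have h1 := hy.1 i
            have h2 := hy'.1 i
            have hmax : (G.d y ⊔ G.d y') i = max (G.d y i) (G.d y' i) := rfl
            rw [hmax]
            rcases le_total (G.d y i) (G.d y' i) with h | h
            · rw [max_eq_right h]; exact h2
            · rw [max_eq_left h]; exact h1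
          refine ⟨w.seg _ hm, ⟨?_, ?_, w.d_seg _ _⟩,
            (G.alpha_eq_true_iff _ _).mpr (G.lePath_seg w _ hm)⟩
          · obtain ⟨h1, h2⟩ := hy
            have hmono := w.mono _ _ h1 hm (fun i => le_sup_left)
            rw [h2] at hmono
            exact hmono
          · obtain ⟨h1, h2⟩ := hy'
            have hmono := w.mono _ _ h1 hm (fun i => le_sup_right)
            rw [h2] at hmono
            exact hmono
      · intro f hf
        rw [hC] at hf
        obtain ⟨h0, h1, h2, h3⟩ := hf
        obtain ⟨w, hw, hiff⟩ := G.exists_path v {y | f y = true} h0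
          (fun y μ hy hle => h1 y μ hy hle) (fun y y' hy hy' => h2 y y' hy hy')
          (fun y y' hy hy' => by
            obtain ⟨ν, ⟨_, _, hd⟩, hν⟩ := h3 y y' hy hy'
            exact ⟨ν, hν, hd⟩)
        refine ⟨w, hw, ?_⟩
        funext y
        cases hfy : f y with
        | true => rw [G.alpha_eq_true_iff]; exact (hiff y).mpr hfy
        | false =>
          refine Bool.eq_false_iff.mpr fun hc => ?_
          have := (hiff y).mp ((G.alpha_eq_true_iff w y).mp hc)
          rw [Set.mem_setOf_eq, hfy] at this
          exact Bool.false_ne_true this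
    exact hemb.isCompact_iff.mpr (himg ▸ hclosed.isCompact)
  refine ⟨hemb.metrizableSpace, ?_, ?_, fun v => ⟨hcompact v, hopen v⟩, ?_⟩
  · ext w
    simp only [Set.mem_iUnion, Set.mem_univ, iff_true]
    exact ⟨_, hWv_mem w⟩
  · intro v v' hne
    rw [Set.disjoint_left]
    intro w hw hw'
    apply hne
    have hid : G.id v = G.id v' := by
      have h1 : w.root = G.id v := hw
      have h2 : w.root = G.id v' := hw'
      rw [← h1, h2]
    calc v = G.r (G.id v) := (G.r_id v).symm
      _ = G.r (G.id v') := by rw [hid]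
      _ = v' := G.r_id v'
  · intro w
    exact ⟨G.Wv (G.r w.root), hcompact _, (hopen _).mem_nhds (hWv_mem w)⟩
end

section
/- For n = 1, 2, 3, …, let X_n be a locally compact, second countable, Hausdorff topological space, A = Π_{n=1}^∞ X_n^∞, and W_0 the quotient of A by the truncation map Q. For x ∈ W_0 write x̄ = Q^{-1}({x}) ⊂ A. Then for a sequence {x^n} in W_0 and x ∈ W_0: x^n → x in W_0 if and only if for every sequence {y^n} in A with y^n ∈ x̄^n for all n, every cluster point of {y^n} lies in x̄. -/
open Filter Topology

/-- The set `W₀ = Y₀ ∪ Z`: the disjoint union of the finite products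
`Y^k = X_1 × ⋯ × X_k` (with `Y^0 = {0}` a single point, the empty string) and the
infinite product `Z = Π_{n} X_n`.  (Indices are `0`-based here: `X 0, X 1, …` play the
roles of `X_1, X_2, …`.) -/
def W0 (X : ℕ → Type) : Type := (Σ k : ℕ, ∀ i : Fin k, X i) ⊕ (∀ n, X n)

namespace W0

variable {X : ℕ → Type}

/-- A finite string, an element of `Y₀ = ∪_k Y^k ⊂ W₀`. -/
def fin (p : Σ k : ℕ, ∀ i : Fin k, X i) : W0 X := Sum.inl p

/-- An infinite string, an element of `Z = Π_n X_n ⊂ W₀`. -/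
def inf (z : ∀ n, X n) : W0 X := Sum.inr z

/-- The point `0`, the empty string: the unique element of `Y^0`. -/
def zero : W0 X := Sum.inl ⟨0, fun i => i.elim0⟩

/-- The length `ℓ(w) ∈ ℕ ∪ {∞}` of an element of `W₀`. -/
def len : W0 X → ℕ∞ := Sum.elim (fun p => (p.1 : ℕ∞)) (fun _ => ⊤)

/-- The `i`-th coordinate of an element of `W₀`, as an element of the one-point
compactification `X_i^∞`; it is taken to be `∞_i` when `i ≥ ℓ(w)`. -/
def coord (w : W0 X) (i : ℕ) : OnePoint (X i) :=
  Sum.elim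
    (fun p : Σ k : ℕ, ∀ j : Fin k, X j =>
      if h : i < p.1 then ((p.2 ⟨i, h⟩ : X i) : OnePoint (X i)) else OnePoint.infty)
    (fun z => ((z i : X i) : OnePoint (X i))) w

/-- The value of a point of `X^∞` other than `∞`. -/
noncomputable def val {Y : Type} (o : OnePoint Y) (h : o ≠ OnePoint.infty) : Y :=
  (OnePoint.ne_infty_iff_exists.mp h).choose

open Classical in
/-- The truncation map `Q : A = Π_n X_n^∞ → W₀`: `Q({x_i}) = {x_i} ∈ Z` if no
coordinate is a point at infinity; `Q({x_i}) = (x_1, …, x_n) ∈ Y^n` if `n` is smallest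
with `x_{n+1} = ∞_{n+1}`; `Q({x_i}) = 0` if `x_1 = ∞_1`. -/
noncomputable def Q (x : ∀ n, OnePoint (X n)) : W0 X :=
  if h : ∃ n, x n = OnePoint.infty then
    fin ⟨Nat.find h, fun i => val (x i) (Nat.find_min h i.isLt)⟩
  else
    inf fun n => val (x n) (fun hn => h ⟨n, hn⟩)

/-- `W₀` carries the quotient topology induced by the surjection `Q` from the product
`A = Π_n X_n^∞` of the one-point compactifications. -/
noncomputable instance [∀ n, TopologicalSpace (X n)] : TopologicalSpace (W0 X) :=
  TopologicalSpace.coinduced Q Pi.topologicalSpace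

end W0

/-! The map `Q` has the section `coord`, and `W₀` is Hausdorff: two distinct points first differ
at some coordinate `i`, all earlier coordinates being finite, and disjoint neighbourhoods of the
two `i`-th coordinates in `X_i^∞` give disjoint `Q`-saturated open boxes in `A`. Since `Q` is
continuous, "⇒" is uniqueness of limits. For "⇐", each `X_n` is σ-compact, so `X_n^∞` is first
countable and `A` is sequentially compact. If `x^n ↛ x`, some subsequence stays outside an open
`U ∋ x`; lifting it through the section and extracting a convergent subsequence gives a cluster
point in the closed set `A \ Q⁻¹ U`, hence outside `x̄`. -/

open scoped OnePoint

section Countability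

variable {Y : Type*} [TopologicalSpace Y]

instance Filter.isCountablyGenerated_cocompact [WeaklyLocallyCompactSpace Y]
    [SigmaCompactSpace Y] : (cocompact Y).IsCountablyGenerated :=
  let K := CompactExhaustion.choice Y
  (hasBasis_cocompact.to_hasBasis (p' := fun _ : ℕ => True)
    (fun _ hs =>
      let ⟨n, hn⟩ := K.exists_superset_of_isCompact hs
      ⟨n, trivial, Set.compl_subset_compl.2 hn⟩)
    (fun n _ => ⟨K n, K.isCompact n, subset_rfl⟩)).isCountablyGenerated

instance OnePoint.firstCountableTopology [FirstCountableTopology Y] [WeaklyLocallyCompactSpace Y]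
    [SigmaCompactSpace Y] [R1Space Y] : FirstCountableTopology (OnePoint Y) where
  nhds_generated_countable
    | ∞ => by rw [OnePoint.nhds_infty_eq, coclosedCompact_eq_cocompact]; infer_instance
    | (y : Y) => by rw [OnePoint.nhds_coe_eq]; infer_instance

end Countability

section Subsequences

variable {A W : Type*} [TopologicalSpace A] [TopologicalSpace W] {f : A → W}

theorem eq_of_tendsto_comp_of_tendsto_subseq [T2Space W] (hf : Continuous f) {s : ℕ → A}
    {w : W} {y : A} {φ : ℕ → ℕ} (hs : Tendsto (f ∘ s) atTop (𝓝 w)) (hφ : StrictMono φ)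
    (hy : Tendsto (s ∘ φ) atTop (𝓝 y)) : f y = w :=
  tendsto_nhds_unique ((hf.tendsto y).comp hy) (hs.comp hφ.tendsto_atTop)

theorem tendsto_comp_of_forall_tendsto_subseq [SeqCompactSpace A] (hf : Continuous f)
    {s : ℕ → A} {w : W}
    (h : ∀ y (φ : ℕ → ℕ), StrictMono φ → Tendsto (s ∘ φ) atTop (𝓝 y) → f y = w) :
    Tendsto (f ∘ s) atTop (𝓝 w) := by
  refine tendsto_nhds.2 fun U hU hwU => ?_
  by_contra hfreq
  obtain ⟨φ, hφ, hout⟩ := extraction_of_frequently_atTop (not_eventually.1 hfreq)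
  obtain ⟨y, ψ, hψ, hy⟩ := SeqCompactSpace.tendsto_subseq (s ∘ φ)
  have hyU : y ∈ (f ⁻¹' U)ᶜ :=
    (hU.preimage hf).isClosed_compl.mem_of_tendsto hy (.of_forall fun k => hout (ψ k))
  exact hyU (by rwa [Set.mem_preimage, h y (φ ∘ ψ) (hφ.comp hψ) hy])

end Subsequences

namespace W0

variable {X : ℕ → Type}

theorem coe_val {Y : Type} (o : OnePoint Y) (h : o ≠ ∞) : ((val o h : Y) : OnePoint Y) = o :=
  (OnePoint.ne_infty_iff_exists.mp h).choose_spec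

theorem val_coe {Y : Type} (y : Y) (h : (y : OnePoint Y) ≠ ∞) : val (y : OnePoint Y) h = y :=
  OnePoint.coe_injective (coe_val _ h)

theorem coord_fin (p : Σ k : ℕ, ∀ i : Fin k, X i) (i : ℕ) :
    coord (fin p) i = if h : i < p.1 then (p.2 ⟨i, h⟩ : OnePoint (X i)) else ∞ :=
  rfl

theorem coord_inf (z : ∀ n, X n) (i : ℕ) : coord (inf z) i = z i :=
  rfl

theorem coord_eq_infty_iff (w : W0 X) (i : ℕ) : coord w i = ∞ ↔ len w ≤ i := by
  rcases w with ⟨k, f⟩ | z <;> simp [coord, len]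

theorem Q_eq_fin {x : ∀ n, OnePoint (X n)} {k : ℕ} (hk : x k = ∞) (hlt : ∀ i < k, x i ≠ ∞) :
    Q x = fin ⟨k, fun i => val (x i) (hlt i i.isLt)⟩ := by
  classical
  have hx : ∃ n, x n = ∞ := ⟨k, hk⟩
  have hfind : Nat.find hx = k :=
    le_antisymm (Nat.find_le hk) (not_lt.1 fun h => hlt _ h (Nat.find_spec hx))
  subst hfind
  simp only [Q, dif_pos hx]

theorem Q_eq_inf {x : ∀ n, OnePoint (X n)} (h : ∀ n, x n ≠ ∞) :
    Q x = inf fun n => val (x n) (h n) := by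
  have hx : ¬∃ n, x n = ∞ := fun ⟨n, hn⟩ => h n hn
  simp only [Q, dif_neg hx]

theorem Q_coord (w : W0 X) : Q (coord w) = w := by
  rcases w with ⟨k, f⟩ | z
  · change Q (coord (fin ⟨k, f⟩)) = fin ⟨k, f⟩
    have hlt : ∀ i < k, coord (fin ⟨k, f⟩) i ≠ ∞ := fun i hi => by simp [coord_fin, hi]
    rw [Q_eq_fin (by simp [coord_fin]) hlt]
    congr
    funext i
    simp only [coord_fin, dif_pos i.isLt, val_coe]
  · change Q (coord (inf z)) = inf z
    have hfin : ∀ n, coord (inf z) n ≠ ∞ := fun n => OnePoint.coe_ne_infty (z n)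
    rw [Q_eq_inf hfin]
    congr
    funext n
    exact val_coe (z n) _

theorem coord_Q {x : ∀ n, OnePoint (X n)} {j : ℕ} (hj : ∀ k < j, x k ≠ ∞) :
    coord (Q x) j = x j := by
  classical
  by_cases hx : ∃ n, x n = ∞
  · rw [Q_eq_fin (Nat.find_spec hx) fun i hi => Nat.find_min hx hi, coord_fin]
    split_ifs with h
    · exact coe_val _ (Nat.find_min hx h)
    · have hfind : Nat.find hx = j := le_antisymm (not_lt.1 h)
        (not_lt.1 fun hlt => hj _ hlt (Nat.find_spec hx))
      exact hfind ▸ (Nat.find_spec hx).symm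
  · push Not at hx
    rw [Q_eq_inf hx, coord_inf, coe_val]

theorem eq_of_Q_eq {x x' : ∀ n, OnePoint (X n)} (h : Q x = Q x') {j : ℕ}
    (hj : ∀ k < j, x k ≠ ∞) : x j = x' j := by
  induction j using Nat.strong_induction_on with
  | _ j ih =>
    have hj' : ∀ k < j, x' k ≠ ∞ := fun k hk =>
      ih k hk (fun m hm => hj m (hm.trans hk)) ▸ hj k hk
    rw [← coord_Q hj, h, coord_Q hj']

theorem exists_coord_ne_of_ne {w w' : W0 X} (h : w ≠ w') :
    ∃ i, coord w i ≠ coord w' i ∧ ∀ j < i, coord w j = coord w' j ∧ coord w j ≠ ∞ := by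
  classical
  have hne : ∃ i, coord w i ≠ coord w' i := by
    by_contra! hc
    exact h (by rw [← Q_coord w, ← Q_coord w', funext hc])
  refine ⟨Nat.find hne, Nat.find_spec hne, fun j hj => ?_⟩
  have heq : coord w j = coord w' j := not_not.1 (Nat.find_min hne hj)
  refine ⟨heq, fun hinf => Nat.find_spec hne ?_⟩
  have hji : (j : ℕ∞) ≤ Nat.find hne := Nat.cast_le.2 hj.le
  rw [(coord_eq_infty_iff w _).2 (((coord_eq_infty_iff w j).1 hinf).trans hji),
    (coord_eq_infty_iff w' _).2 (((coord_eq_infty_iff w' j).1 (heq ▸ hinf)).trans hji)]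

def box (i : ℕ) (U : Set (OnePoint (X i))) : Set (∀ n, OnePoint (X n)) :=
  {x | (∀ j < i, x j ≠ ∞) ∧ x i ∈ U}

theorem preimage_image_box (i : ℕ) (U : Set (OnePoint (X i))) :
    Q ⁻¹' (Q '' box i U) = box i U := by
  refine subset_antisymm ?_ (Set.subset_preimage_image _ _)
  rintro x ⟨x', ⟨hfin, hU⟩, hQ⟩
  have heq : ∀ j ≤ i, x' j = x j := fun j hj =>
    eq_of_Q_eq hQ fun k hk => hfin k (hk.trans_le hj)
  exact ⟨fun j hj => heq j hj.le ▸ hfin j hj, heq i le_rfl ▸ hU⟩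

section Topology

variable [∀ n, TopologicalSpace (X n)]

theorem continuous_Q : Continuous (Q : (∀ n, OnePoint (X n)) → W0 X) :=
  continuous_coinduced_rng

theorem isOpen_box {i : ℕ} {U : Set (OnePoint (X i))} (hU : IsOpen U) : IsOpen (box i U) := by
  have hfin : IsOpen {x : ∀ n, OnePoint (X n) | ∀ j < i, x j ≠ ∞} := by
    simp only [Set.ofPred_forall]
    exact (Set.finite_lt_nat i).isOpen_biInter fun j _ =>
      show IsOpen ((fun x : ∀ n, OnePoint (X n) => x j) ⁻¹' {∞}ᶜ) from
        OnePoint.isClosed_infty.isOpen_compl.preimage (continuous_apply j)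
  exact hfin.inter (hU.preimage (continuous_apply i))

theorem isOpen_image_box {i : ℕ} {U : Set (OnePoint (X i))} (hU : IsOpen U) :
    IsOpen (Q '' box i U) :=
  isOpen_coinduced.2 (by rw [preimage_image_box]; exact isOpen_box hU)

instance [∀ n, LocallyCompactSpace (X n)] [∀ n, T2Space (X n)] : T2Space (W0 X) where
  t2 w w' h := by
    obtain ⟨i, hi, hfin⟩ := exists_coord_ne_of_ne h
    obtain ⟨U, V, hU, hV, hwU, hw'V, hUV⟩ := t2_separation hi
    refine ⟨Q '' box i U, Q '' box i V, isOpen_image_box hU, isOpen_image_box hV,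
      ⟨coord w, ⟨fun j hj => (hfin j hj).2, hwU⟩, Q_coord w⟩,
      ⟨coord w', ⟨fun j hj => (hfin j hj).1 ▸ (hfin j hj).2, hw'V⟩, Q_coord w'⟩, ?_⟩
    rw [Set.disjoint_left]
    rintro _ ⟨x, hx, rfl⟩ hxV
    rw [← Set.mem_preimage, preimage_image_box] at hxV
    exact Set.disjoint_left.1 hUV hx.2 hxV.2

end Topology

end W0

/-- Proposition 3.4: for a sequence `{x^n}` in `W₀` and `x ∈ W₀`, `x^n → x` in `W₀` iff
for every sequence `{y^n}` in `A` with `y^n ∈ Q⁻¹({x^n})`, every cluster point of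
`{y^n}` (i.e. every limit of a subsequence) lies in `Q⁻¹({x})`. -/
theorem stmt9 (X : ℕ → Type) [∀ n, TopologicalSpace (X n)]
    [∀ n, LocallyCompactSpace (X n)] [∀ n, SecondCountableTopology (X n)]
    [∀ n, T2Space (X n)] (xseq : ℕ → W0 X) (x : W0 X) :
    Filter.Tendsto xseq Filter.atTop (nhds x) ↔
      ∀ yseq : ℕ → (∀ n, OnePoint (X n)), (∀ n, W0.Q (yseq n) = xseq n) →
        ∀ y : ∀ n, OnePoint (X n),
          (∃ φ : ℕ → ℕ, StrictMono φ ∧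
            Filter.Tendsto (yseq ∘ φ) Filter.atTop (nhds y)) →
          W0.Q y = x := by
  constructor
  · rintro h yseq hy y ⟨φ, hφ, hyφ⟩
    have hQ : W0.Q ∘ yseq = xseq := funext hy
    exact eq_of_tendsto_comp_of_tendsto_subseq W0.continuous_Q (hQ ▸ h) hφ hyφ
  · intro H
    have hlift : ∀ n, W0.Q (W0.coord (xseq n)) = xseq n := fun n => W0.Q_coord _
    have hQ : W0.Q ∘ (fun n => W0.coord (xseq n)) = xseq := funext hlift
    exact hQ ▸ tendsto_comp_of_forall_tendsto_subseq W0.continuous_Q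
      fun y φ hφ hy => H _ hlift y ⟨φ, hφ, hy⟩
end
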